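/- arXiv:1206.1735 — 2 statements merged into one kernel-verified Lean document; each statement's English description precedes it below -/
import Mathlib

section
/- Let A ⊆ B be positive affine semigroups in ℕ^m and K a field. Then K[B] is a finitely generated K[A]-module (with the module structure induced by the inclusion A ⊆ B) if and only if C(A) = C(B). -/
open scoped BigOperators

/-- The coordinatewise cast `ℕ^m → ℤ^m`. -/
def ntz {m : ℕ} (x : Fin m → ℕ) : Fin m → ℤ := fun i => (x i : ℤ)

/-- The coordinatewise cast `ℕ^m → ℚ^m`. -/
def ntq {m : ℕ} (x : Fin m → ℕ) : Fin m → ℚ := fun i => (x i : ℚ)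

/-- `G(S)`: the subgroup of `ℤ^m` generated by an affine semigroup `S ⊆ ℕ^m`. -/
def grp {m : ℕ} (S : AddSubmonoid (Fin m → ℕ)) : AddSubgroup (Fin m → ℤ) :=
  AddSubgroup.closure (ntz '' (S : Set (Fin m → ℕ)))

/-- `C(S)`: the cone in `ℚ^m` generated by `S`, i.e. all nonnegative rational
linear combinations of elements of `S`. -/
def cone {m : ℕ} (S : AddSubmonoid (Fin m → ℕ)) : Set (Fin m → ℚ) :=
  {x | ∃ (n : ℕ) (c : Fin n → ℚ) (v : Fin n → Fin m → ℕ),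
    (∀ i, 0 ≤ c i) ∧ (∀ i, v i ∈ S) ∧ x = ∑ i, c i • ntq (v i)}

/-- `B_A := {x ∈ B : x ∉ B + (A \ {0})}`. -/
def BA {m : ℕ} (A B : AddSubmonoid (Fin m → ℕ)) : Set (Fin m → ℕ) :=
  {x | x ∈ B ∧ ¬ ∃ b ∈ B, ∃ a ∈ A, a ≠ 0 ∧ x = b + a}

/-!
If `K[B]` is finite over `K[A]`, then `t^b` is integral over `K[A]` for `b ∈ B`; in a monic
relation of degree `n` the top monomial `t^(n b)` must cancel against some `K[A] t^(k b)` with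
`k < n`, so `(n - k) b ∈ A`. Conversely, if `d_i g_i ∈ A` for generators `g_i` of `B`, then the
finitely many monomials `t^(∑ r_i g_i)` with `r_i < d_i` generate `K[B]` over `K[A]`.
Both conditions say that every element of `B` has a positive multiple in `A`, which, after
clearing denominators, is `C(A) = C(B)`.
-/

namespace AddMonoidAlgebra

variable {R M N : Type*} [CommRing R] [AddCommMonoid M]

theorem finite_mapDomainRingHom_of_forall_exists_add [AddCommMonoid N] (φ : M →+ N)
    {T : Set N} (hT : T.Finite) (h : ∀ n, ∃ m, ∃ t ∈ T, n = φ m + t) :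
    (mapDomainRingHom R φ).Finite := by
  let := (mapDomainRingHom R φ).toAlgebra
  refine ⟨⟨(hT.image fun t => single t (1 : R)).toFinset, ?_⟩⟩
  rw [Set.Finite.coe_toFinset, Submodule.eq_top_iff']
  intro z
  induction z using AddMonoidAlgebra.induction with
  | zero => exact zero_mem _
  | single_add n r z _ _ ih =>
    refine add_mem ?_ ih
    obtain ⟨m, t, ht, rfl⟩ := h n
    have : single (φ m + t) r = single m r • single t (1 : R) := by
      rw [Algebra.smul_def, RingHom.algebraMap_toAlgebra, mapDomainRingHom_apply,
        mapDomain_single, single_mul_single, mul_one]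
    exact this ▸ Submodule.smul_mem _ _ (Submodule.subset_span ⟨t, ht, rfl⟩)

open Polynomial in
theorem exists_nsmul_mem_mrange_of_isIntegralElem [Nontrivial R] [AddCommMonoid N]
    [IsRightCancelAdd N] (φ : M →+ N) {x : N} (hx : (mapDomainRingHom R φ).IsIntegralElem (single x 1)) :
    ∃ n, 0 < n ∧ n • x ∈ AddMonoidHom.mrange φ := by
  classical
  obtain ⟨p, hp, hpx⟩ := hx
  have hpow (k : ℕ) : single x (1 : R) ^ k = single (k • x) 1 := by
    rw [single_pow, one_pow]
  rw [eval₂_eq_sum_range, Finset.sum_range_succ, hp.coeff_natDegree, map_one, one_mul,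
    hpow] at hpx
  generalize p.natDegree = n at hpx
  have hcoeff : ∑ k ∈ Finset.range n,
      (mapDomainRingHom R φ (p.coeff k) * single (k • x) 1).coeff (n • x) + 1 = 0 := by
    simpa [coeff_sum, -mapDomainRingHom_apply] using congrArg (·.coeff (n • x)) hpx
  obtain ⟨k, hk, hne⟩ : ∃ k ∈ Finset.range n,
      (mapDomainRingHom R φ (p.coeff k) * single (k • x) 1).coeff (n • x) ≠ 0 := by
    by_contra! h0
    rw [Finset.sum_eq_zero h0, zero_add] at hcoeff
    exact one_ne_zero hcoeff
  obtain ⟨u, hu, v, hv, huv⟩ := Finset.mem_add.mp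
    (support_coeff_mul_subset _ _ (Finsupp.mem_support_iff.mpr hne))
  obtain ⟨a, -, rfl⟩ := Finset.mem_image.mp (Finsupp.mapDomain_support hu)
  obtain rfl := Finset.mem_singleton.mp (Finsupp.support_single_subset hv)
  rw [Finset.mem_range] at hk
  refine ⟨n - k, Nat.sub_pos_of_lt hk, a, add_right_cancel (b := k • x) ?_⟩
  rw [huv, ← add_nsmul, Nat.sub_add_cancel hk.le]

end AddMonoidAlgebra

namespace AddSubmonoid

variable {M : Type*} [AddCommMonoid M]

theorem exists_finite_forall_mem_add_of_nsmul_mem {A B : AddSubmonoid M} (hB : B.FG)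
    (h : ∀ b ∈ B, ∃ n, 0 < n ∧ n • b ∈ A) :
    ∃ T : Set M, T.Finite ∧ T ⊆ B ∧ ∀ x ∈ B, ∃ a ∈ A, ∃ t ∈ T, x = a + t := by
  obtain ⟨F, rfl⟩ := hB
  choose d hd hdA using fun b : F => h b (subset_closure b.2)
  let remainder (ρ : (b : F) → Fin (d b)) : M := ∑ b, (ρ b : ℕ) • (b : M)
  refine ⟨Set.range remainder, Set.finite_range _, ?_, fun x hx => ?_⟩
  · rintro _ ⟨ρ, rfl⟩
    exact sum_mem _ fun b _ => nsmul_mem (subset_closure b.2) _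
  obtain ⟨μ, rfl⟩ := mem_closure_finset'.mp hx
  refine ⟨∑ b, (μ b / d b) • d b • (b : M), sum_mem _ fun b _ => nsmul_mem (hdA b) _,
    _, ⟨fun b => ⟨μ b % d b, Nat.mod_lt _ (hd b)⟩, rfl⟩, ?_⟩
  rw [← Finset.sum_add_distrib]
  refine Finset.sum_congr rfl fun b _ => ?_
  rw [smul_smul, ← add_smul, Nat.div_add_mod']

end AddSubmonoid

theorem Rat.exists_pos_nat_mul_eq_natCast {ι : Type*} [Fintype ι] (c : ι → ℚ)
    (hc : ∀ i, 0 ≤ c i) : ∃ N : ℕ, 0 < N ∧ ∀ i, ∃ k : ℕ, (N : ℚ) * c i = k := by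
  refine ⟨∏ i, (c i).den, Finset.prod_pos fun i _ => (c i).pos, fun i => ?_⟩
  obtain ⟨t, ht⟩ := Finset.dvd_prod_of_mem (fun i => (c i).den) (Finset.mem_univ i)
  refine ⟨t * (c i).num.toNat, ?_⟩
  rw [ht, Nat.cast_mul, Nat.cast_mul, mul_comm ((c i).den : ℚ), mul_assoc, mul_comm _ (c i),
    Rat.mul_den_eq_num]
  congr 1
  exact_mod_cast (Int.toNat_of_nonneg (Rat.num_nonneg.mpr (hc i))).symm

section Cone

variable {m : ℕ} {S S' : AddSubmonoid (Fin m → ℕ)}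

theorem ntq_injective : Function.Injective (ntq (m := m)) :=
  Nat.cast_injective.comp_left

theorem ntq_nsmul (n : ℕ) (x : Fin m → ℕ) : ntq (n • x) = (n : ℚ) • ntq x := by
  funext i; simp [ntq]

theorem ntq_sum {ι : Type*} (s : Finset ι) (v : ι → Fin m → ℕ) :
    ntq (∑ i ∈ s, v i) = ∑ i ∈ s, ntq (v i) := by
  funext j; simp [ntq]

theorem zero_mem_cone : (0 : Fin m → ℚ) ∈ cone S :=
  ⟨0, ![], ![], by simp, by simp, by simp⟩

theorem add_mem_cone {x y : Fin m → ℚ} (hx : x ∈ cone S) (hy : y ∈ cone S) :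
    x + y ∈ cone S := by
  obtain ⟨n, c, v, hc, hv, rfl⟩ := hx
  obtain ⟨n', c', v', hc', hv', rfl⟩ := hy
  refine ⟨n + n', Fin.append c c', Fin.append v v', Fin.addCases (by simpa) (by simpa),
    Fin.addCases (by simpa) (by simpa), ?_⟩
  simp [Fin.sum_univ_add]

theorem smul_mem_cone {q : ℚ} {x : Fin m → ℚ} (hq : 0 ≤ q) (hx : x ∈ cone S) :
    q • x ∈ cone S := by
  obtain ⟨n, c, v, hc, hv, rfl⟩ := hx
  exact ⟨n, fun i => q * c i, v, fun i => mul_nonneg hq (hc i), hv, by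
    simp [Finset.smul_sum, mul_smul]⟩

theorem ntq_mem_cone {s : Fin m → ℕ} (hs : s ∈ S) : ntq s ∈ cone S :=
  ⟨1, ![1], ![s], by simp, by simp [hs], by simp⟩

theorem cone_subset_of_forall_ntq_mem (h : ∀ s ∈ S, ntq s ∈ cone S') : cone S ⊆ cone S' := by
  rintro _ ⟨n, c, v, hc, hv, rfl⟩
  exact Finset.sum_induction _ (· ∈ cone S') (fun _ _ => add_mem_cone) zero_mem_cone
    fun i _ => smul_mem_cone (hc i) (h _ (hv i))

theorem ntq_mem_cone_iff {b : Fin m → ℕ} : ntq b ∈ cone S ↔ ∃ n, 0 < n ∧ n • b ∈ S := by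
  constructor
  · rintro ⟨n, c, v, hc, hv, hb⟩
    obtain ⟨N, hN, hk⟩ := Rat.exists_pos_nat_mul_eq_natCast c hc
    choose k hk using hk
    refine ⟨N, hN, ?_⟩
    have : N • b = ∑ i, k i • v i := ntq_injective <| by
      simp only [ntq_sum, ntq_nsmul, hb, Finset.smul_sum, smul_smul, hk]
    exact this ▸ sum_mem fun i _ => nsmul_mem (hv i) _
  · rintro ⟨n, hn, hnb⟩
    have h := smul_mem_cone (q := (n : ℚ)⁻¹) (by positivity) (ntq_mem_cone hnb)
    rwa [ntq_nsmul, inv_smul_smul₀ (by exact_mod_cast hn.ne')] at h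

theorem cone_eq_iff_forall_exists_nsmul_mem (h : S ≤ S') :
    cone S = cone S' ↔ ∀ b ∈ S', ∃ n, 0 < n ∧ n • b ∈ S := by
  simp_rw [← ntq_mem_cone_iff]
  refine ⟨fun hc b hb => hc ▸ ntq_mem_cone hb, fun hS' => ?_⟩
  exact (cone_subset_of_forall_ntq_mem fun s hs => ntq_mem_cone (h hs)).antisymm
    (cone_subset_of_forall_ntq_mem hS')

end Cone

theorem stmt1_general {m : ℕ} (K : Type) [Field K] (A B : AddSubmonoid (Fin m → ℕ))
    (hBfg : B.FG) (hAB : A ≤ B) :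
    letI : Module (AddMonoidAlgebra K A) (AddMonoidAlgebra K B) :=
      Module.compHom (AddMonoidAlgebra K B)
        (AddMonoidAlgebra.mapDomainRingHom K (AddSubmonoid.inclusion hAB))
    Module.Finite (AddMonoidAlgebra K A) (AddMonoidAlgebra K B) ↔ cone A = cone B := by
  rw [cone_eq_iff_forall_exists_nsmul_mem hAB]
  change (AddMonoidAlgebra.mapDomainRingHom K (AddSubmonoid.inclusion hAB)).Finite ↔ _
  constructor
  · intro hfin b hb
    obtain ⟨n, hn, a, ha⟩ := AddMonoidAlgebra.exists_nsmul_mem_mrange_of_isIntegralElem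
      (x := ⟨b, hb⟩) _ (hfin.to_isIntegral _)
    have hab : (a : Fin m → ℕ) = n • b := congrArg Subtype.val ha
    exact ⟨n, hn, hab ▸ a.2⟩
  · intro hA
    obtain ⟨T, hT, hTB, hBT⟩ := AddSubmonoid.exists_finite_forall_mem_add_of_nsmul_mem hBfg hA
    refine AddMonoidAlgebra.finite_mapDomainRingHom_of_forall_exists_add _
      (hT.preimage Subtype.val_injective.injOn) fun ⟨x, hx⟩ => ?_
    obtain ⟨a, ha, t, ht, rfl⟩ := hBT x hx
    exact ⟨⟨a, ha⟩, ⟨t, hTB ht⟩, ht, rfl⟩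

/-- Let `A ⊆ B` be positive affine semigroups in `ℕ^m` and `K` a field.
Then `K[B]` is a finitely generated `K[A]`-module (with the module structure induced
by the inclusion `A ⊆ B`) if and only if `C(A) = C(B)`. -/
theorem stmt1 {m : ℕ} (K : Type) [Field K] (A B : AddSubmonoid (Fin m → ℕ))
    (hAfg : A.FG) (hBfg : B.FG) (hAB : A ≤ B) :
    letI : Module (AddMonoidAlgebra K A) (AddMonoidAlgebra K B) :=
      Module.compHom (AddMonoidAlgebra K B)
        (AddMonoidAlgebra.mapDomainRingHom K (AddSubmonoid.inclusion hAB))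
    Module.Finite (AddMonoidAlgebra K A) (AddMonoidAlgebra K B) ↔ cone A = cone B :=
  stmt1_general K A B hBfg hAB
end

section
/- Let A ⊆ B be positive affine semigroups in ℕ^m, and define the divisibility preorder on B by x ≤ y if and only if there exists z ∈ B with x + z = y. Then for x, y ∈ B_A one has x ≤ y if and only if y − x ∈ B_A. -/
open scoped BigOperators

lemma ntz_add {m : ℕ} (x z : Fin m → ℕ) : ntz (x + z) = ntz x + ntz z := by
  funext i
  simp [ntz]

lemma ntz_injective {m : ℕ} : Function.Injective (ntz (m := m)) := fun _ _ h =>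
  funext fun i => Int.ofNat_inj.mp (congrFun h i)

lemma ntz_sub_eq_ntz_iff {m : ℕ} {x y w : Fin m → ℕ} : ntz y - ntz x = ntz w ↔ x + w = y := by
  rw [sub_eq_iff_eq_add', ← ntz_add, ntz_injective.eq_iff, eq_comm]

lemma mem_BA_of_add_mem_BA {m : ℕ} {A B : AddSubmonoid (Fin m → ℕ)} {x z : Fin m → ℕ}
    (hx : x ∈ B) (hz : z ∈ B) (hxz : x + z ∈ BA A B) : z ∈ BA A B := by
  refine ⟨hz, ?_⟩
  rintro ⟨b, hb, a, ha, ha0, rfl⟩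
  exact hxz.2 ⟨x + b, B.add_mem hx hb, a, ha, ha0, (add_assoc x b a).symm⟩

theorem stmt8_general {m : ℕ} (A B : AddSubmonoid (Fin m → ℕ))
    (x y : Fin m → ℕ) (hx : x ∈ BA A B) (hy : y ∈ BA A B) :
    (∃ z ∈ B, x + z = y) ↔ ∃ w ∈ BA A B, ntz y - ntz x = ntz w := by
  simp_rw [ntz_sub_eq_ntz_iff]
  constructor
  · rintro ⟨z, hz, rfl⟩
    exact ⟨z, mem_BA_of_add_mem_BA hx.1 hz hy, rfl⟩
  · rintro ⟨w, hw, hxw⟩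
    exact ⟨w, hw.1, hxw⟩

/-- Let `A ⊆ B` be positive affine semigroups in `ℕ^m`, with the
divisibility preorder on `B`: `x ≤ y` iff there is `z ∈ B` with `x + z = y`.
Then for `x, y ∈ B_A` one has `x ≤ y` if and only if `y − x ∈ B_A` (the difference
taken in `ℤ^m`; membership in `B_A` includes `y − x ∈ ℕ^m`). -/
theorem stmt8 {m : ℕ} (A B : AddSubmonoid (Fin m → ℕ)) (hAfg : A.FG) (hBfg : B.FG)
    (hAB : A ≤ B) (x y : Fin m → ℕ) (hx : x ∈ BA A B) (hy : y ∈ BA A B) :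
    (∃ z ∈ B, x + z = y) ↔ ∃ w ∈ BA A B, ntz y - ntz x = ntz w :=
  stmt8_general A B x y hx hy
end
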